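/- Let T be a collection of subsets of a finite universe U, let R ⊆ U be nonempty and not a subset of any member of T, and set T' = T ∪ {R}. Let s and s' denote the minimum sizes of DAG compressions of the twinned incidence graphs of T and of T', respectively. If some X₀ ⊆ T satisfies R ⊆ ⋃X₀, and k_⊇ denotes the minimum cardinality of a subset X ⊆ T with R ⊆ ⋃X, then s' ≥ s + k_⊇ + 2. -/

import Mathlib

open Finset

section Defs

variable {α : Type*}

/-- The arc relation induced by a finite set of arcs. -/
def ArcRel (A : Finset (α × α)) (x y : α) : Prop := (x, y) ∈ A

/-- The cluster of a vertex `v`: the set of original vertices (elements of `Vbar`,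
which are exactly the sinks of the cluster DAG) reachable from `v` in `(V, A)`. -/
def Cluster [DecidableEq α] (Vbar : Finset α) (A : Finset (α × α)) (v : α) : Set α :=
  {u | u ∈ Vbar ∧ Relation.ReflTransGen (ArcRel A) v u}

/-- `(V, A, E)` is a DAG compression of the directed graph `(Vbar, Ebar)`. -/
structure IsDagCompression [DecidableEq α] (Vbar : Finset α) (Ebar : Finset (α × α))
    (V : Finset α) (A E : Finset (α × α)) : Prop where
  vbar_subset : Vbar ⊆ V
  arcs_subset : A ⊆ V ×ˢ V
  acyclic : ∀ v : α, ¬ Relation.TransGen (ArcRel A) v v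
  sinks : ∀ v ∈ V, ((∀ u, (v, u) ∉ A) ↔ v ∈ Vbar)
  edges_subset : E ⊆ V ×ˢ V
  represents : (↑Ebar : Set (α × α)) =
    ⋃ e ∈ E, (Cluster Vbar A e.1) ×ˢ (Cluster Vbar A e.2)

/-- An optimal DAG compression: no DAG compression of the same graph has smaller size
`|A| + |E|`. -/
def IsOptimalDagCompression [DecidableEq α] (Vbar : Finset α) (Ebar : Finset (α × α))
    (V : Finset α) (A E : Finset (α × α)) : Prop :=
  IsDagCompression Vbar Ebar V A E ∧
    ∀ (V' : Finset α) (A' E' : Finset (α × α)),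
      IsDagCompression Vbar Ebar V' A' E' → A.card + E.card ≤ A'.card + E'.card

/-- The minimum size `|A| + |E|` of a DAG compression of `(Vbar, Ebar)`. -/
noncomputable def minCompSize [DecidableEq α] (Vbar : Finset α) (Ebar : Finset (α × α)) : ℕ :=
  sInf {n | ∃ (V : Finset α) (A E : Finset (α × α)),
    IsDagCompression Vbar Ebar V A E ∧ A.card + E.card = n}

/-- Two vertices are twins in a directed graph with edge set `F`. -/
def Twins (F : Finset (α × α)) (t₁ t₂ : α) : Prop :=
  (∀ v, (v, t₁) ∈ F ↔ (v, t₂) ∈ F) ∧ (∀ v, (t₁, v) ∈ F ↔ (t₂, v) ∈ F)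

/-- `(V, A)` is a rooted tree: there is a root `r ∈ V` from which every vertex of `V`
is reachable by a unique directed path. -/
def IsTreeOn (V : Finset α) (A : Finset (α × α)) : Prop :=
  ∃ r ∈ V, ∀ v ∈ V, ∃! l : List α,
    l.Chain' (ArcRel A) ∧ l.head? = some r ∧ l.getLast? = some v

end Defs

/-- Vertex set of the `g × g` rook graph: the grid `{1,…,g} × {1,…,g}`. -/
def rookV (g : ℕ) : Finset (ℕ × ℕ) := Finset.Icc 1 g ×ˢ Finset.Icc 1 g

/-- Edge set of the `g × g` rook graph: `(r₁,c₁) → (r₂,c₂)` iff `r₁ = r₂ ∨ c₁ = c₂`. -/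
def rookE (g : ℕ) : Finset ((ℕ × ℕ) × (ℕ × ℕ)) :=
  (rookV g ×ˢ rookV g).filter (fun e => e.1.1 = e.2.1 ∨ e.1.2 = e.2.2)

section Tig

variable {α : Type*} [DecidableEq α]

/-- Vertex type used for twinned incidence graphs: either an element of the universe
(second shore) or one of the fresh vertices `a_S`, `b_S` (first shore). -/
abbrev TigVertex (α : Type*) := α ⊕ (Finset α × Bool)

/-- The fresh vertex `a_S`. -/
def aVert (S : Finset α) : TigVertex α := Sum.inr (S, false)

/-- The fresh vertex `b_S`. -/
def bVert (S : Finset α) : TigVertex α := Sum.inr (S, true)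

/-- Vertex set of the twinned incidence graph of a collection `T` of subsets of `U`. -/
def tigV (U : Finset α) (T : Finset (Finset α)) : Finset (TigVertex α) :=
  U.image Sum.inl ∪ T.image aVert ∪ T.image bVert

/-- Edge set of the twinned incidence graph: edges `(a_S, s)` and `(b_S, s)` for
`S ∈ T` and `s ∈ S`. -/
def tigE (T : Finset (Finset α)) : Finset (TigVertex α × TigVertex α) :=
  T.biUnion fun S =>
    S.image (fun s => (aVert S, Sum.inl s)) ∪ S.image (fun s => (bVert S, Sum.inl s))

end Tig

/-- `{S ∩ {1,…,i} : S ∈ T, 1 ≤ i ≤ m} ∖ {∅}` together with all singletons `{j}`, `j ∈ {1,…,m}`. -/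
def hatCollection (m : ℕ) (T : Finset (Finset ℕ)) : Finset (Finset ℕ) :=
  (Finset.Icc 1 m).image (fun j => ({j} : Finset ℕ)) ∪
    ((T ×ˢ Finset.Icc 1 m).image (fun p => p.1 ∩ Finset.Icc 1 p.2)).erase ∅

/-!
Take an optimal compression of the graph of `T ∪ {R}` and delete the twins `aVert R`, `bVert R`
from it, together with every arc that is no longer reachable from a surviving compression edge.
What is left compresses the graph of `T`, so it suffices to find `k + 2` deleted items.
Every `r ∈ R` is reached from `aVert R`, and following that path yields a deleted item whose
shadow contains `r` and lies inside one member of `T`; these items give a cover of `R`.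
The compression edges of `bVert R` enter the twins through deleted items that this cover never
uses (spares). If there were only one spare, every compression edge of `bVert R` would pass
through it. For an arc this puts `R` inside a single member of `T`. For an edge, the arcs
leaving its head give a second cover of `R`, which uses neither that edge nor the item entering
`aVert R`.
-/
open Relation

section CoverNumber

variable {α : Type*} [DecidableEq α]

noncomputable def coverNumber (T : Finset (Finset α)) (R : Finset α) : ℕ :=
  sInf {m | ∃ X : Finset (Finset α), X ⊆ T ∧ R ⊆ X.sup id ∧ X.card = m}

theorem coverNumber_le_card {ι : Type*} {T : Finset (Finset α)} {R : Finset α}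
    (W : Finset ι) (c : ι → Set α) (hW : ∀ t ∈ W, ∃ S ∈ T, c t ⊆ ↑S)
    (hR : ∀ r ∈ R, ∃ t ∈ W, r ∈ c t) : coverNumber T R ≤ W.card := by
  choose! f hfT hcf using hW
  refine le_trans (Nat.sInf_le ?_) (card_image_le (s := W) (f := f))
  refine ⟨W.image f, fun S hS => ?_, fun r hr => ?_, rfl⟩
  · obtain ⟨t, ht, rfl⟩ := mem_image.1 hS
    exact hfT t ht
  · obtain ⟨t, ht, hrt⟩ := hR r hr
    exact mem_sup.2 ⟨f t, mem_image_of_mem f ht, hcf t ht hrt⟩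

theorem coverNumber_add_two_le {ι : Type*} {T : Finset (Finset α)} {R : Finset α}
    {D : Finset ι} (c : ι → Set α) {σ₁ σ₂ : ι} (hne : σ₁ ≠ σ₂) (h₁ : σ₁ ∈ D) (h₂ : σ₂ ∈ D)
    (hcov : ∀ r ∈ R, ∃ t ∈ D, t ≠ σ₁ ∧ t ≠ σ₂ ∧ r ∈ c t ∧ ∃ S ∈ T, c t ⊆ ↑S) :
    coverNumber T R + 2 ≤ D.card := by
  classical
  have hk := coverNumber_le_card (((D.erase σ₁).erase σ₂).filter fun t => ∃ S ∈ T, c t ⊆ ↑S)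
    c (fun t ht => (mem_filter.1 ht).2) fun r hr => by
      obtain ⟨t, ht, h₁, h₂, hrt, hS⟩ := hcov r hr
      exact ⟨t, mem_filter.2 ⟨mem_erase.2 ⟨h₂, mem_erase.2 ⟨h₁, ht⟩⟩, hS⟩, hrt⟩
  have hW := card_filter_le ((D.erase σ₁).erase σ₂) fun t => ∃ S ∈ T, c t ⊆ ↑S
  rw [card_erase_of_mem (mem_erase.2 ⟨hne.symm, h₂⟩), card_erase_of_mem h₁] at hW
  have : 1 < D.card := one_lt_card.2 ⟨σ₁, h₁, σ₂, h₂, hne⟩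
  omega

end CoverNumber

theorem Relation.ReflTransGen.exists_crossing {β : Type*} {r : β → β → Prop} {P : β → Prop}
    {u w : β} (h : ReflTransGen r u w) (hu : ¬ P u) (hw : P w) :
    ∃ p q, r p q ∧ ¬ P p ∧ P q ∧ ReflTransGen r u p ∧ ReflTransGen r q w := by
  induction h using ReflTransGen.head_induction_on with
  | refl => exact absurd hw hu
  | @head a c hac _ ih =>
    by_cases hc : P c
    · exact ⟨a, c, hac, hu, hc, .refl, ‹_›⟩
    · obtain ⟨p, q, hpq, hp, hq, hap, hqw⟩ := ih hc
      exact ⟨p, q, hpq, hp, hq, .head hac hap, hqw⟩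

section Compression

variable {β : Type*} [DecidableEq β] {Vb V : Finset β} {Eb A E : Finset (β × β)}

local infix:50 " ⇝ " => ReflTransGen (ArcRel A)

theorem cluster_subset_of_reflTransGen {u v : β} (h : u ⇝ v) :
    Cluster Vb A v ⊆ Cluster Vb A u :=
  fun _ hy => ⟨hy.1, h.trans hy.2⟩

namespace IsDagCompression

theorem mem_of_reflTransGen (hc : IsDagCompression Vb Eb V A E) {u v : β} (hu : u ∈ V)
    (h : u ⇝ v) : v ∈ V := by
  induction h with
  | refl => exact hu
  | tail _ hbc _ => exact (mem_product.1 (hc.arcs_subset hbc)).2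

theorem cluster_eq_singleton (hc : IsDagCompression Vb Eb V A E) {v : β} (hv : v ∈ Vb) :
    Cluster Vb A v = {v} := by
  ext y
  refine ⟨fun ⟨_, hvy⟩ => ?_, fun hy => ?_⟩
  · rcases hvy.cases_head with h | ⟨c, hvc, -⟩
    · exact h.symm
    · exact absurd hvc ((hc.sinks v (hc.vbar_subset hv)).2 hv c)
  · obtain rfl := hy
    exact ⟨hv, .refl⟩

open Classical in
theorem cluster_nonempty (hc : IsDagCompression Vb Eb V A E) {v : β} (hv : v ∈ V) :
    (Cluster Vb A v).Nonempty := by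
  induction hn : (V.filter (v ⇝ ·)).card using Nat.strong_induction_on generalizing v with
  | _ n ih =>
  by_cases hvb : v ∈ Vb
  · exact ⟨v, hvb, .refl⟩
  obtain ⟨u, hvu⟩ : ∃ u, (v, u) ∈ A := by
    by_contra! h
    exact hvb ((hc.sinks v hv).1 h)
  have hu : u ∈ V := (mem_product.1 (hc.arcs_subset hvu)).2
  have hlt : (V.filter (u ⇝ ·)).card < n := by
    rw [← hn]
    refine card_lt_card ⟨fun x hx => ?_, fun h => ?_⟩
    · exact mem_filter.2 ⟨(mem_filter.1 hx).1, .head hvu (mem_filter.1 hx).2⟩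
    · exact hc.acyclic v (TransGen.head' hvu (mem_filter.1 (h (mem_filter.2 ⟨hv, .refl⟩))).2)
  obtain ⟨w, hw, huw⟩ := ih _ hlt hu rfl
  exact ⟨w, hw, .head hvu huw⟩

theorem mem_of_mem_cluster (hc : IsDagCompression Vb Eb V A E) {e : β × β} (he : e ∈ E)
    {x y : β} (hx : x ∈ Cluster Vb A e.1) (hy : y ∈ Cluster Vb A e.2) : (x, y) ∈ Eb := by
  have : (x, y) ∈ (Eb : Set (β × β)) := hc.represents ▸ Set.mem_biUnion he ⟨hx, hy⟩
  exact this

theorem exists_edge (hc : IsDagCompression Vb Eb V A E) {x y : β} (hxy : (x, y) ∈ Eb) :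
    ∃ e ∈ E, x ∈ Cluster Vb A e.1 ∧ y ∈ Cluster Vb A e.2 := by
  have : (x, y) ∈ (Eb : Set (β × β)) := hxy
  rw [hc.represents] at this
  obtain ⟨e, he, hxy⟩ := Set.mem_iUnion₂.1 this
  exact ⟨e, he, hxy⟩

theorem minCompSize_le (hc : IsDagCompression Vb Eb V A E) :
    minCompSize Vb Eb ≤ A.card + E.card :=
  Nat.sInf_le ⟨V, A, E, hc, rfl⟩

end IsDagCompression

theorem isDagCompression_self (h : Eb ⊆ Vb ×ˢ Vb) : IsDagCompression Vb Eb Vb ∅ Eb := by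
  have hrefl : ∀ {x y : β}, ReflTransGen (ArcRel (∅ : Finset (β × β))) x y → x = y :=
    fun hxy => hxy.cases_head.resolve_right fun ⟨_, h, _⟩ => notMem_empty _ h
  have hcl : ∀ {v}, v ∈ Vb → Cluster Vb ∅ v = {v} := fun hv => by
    ext y
    refine ⟨fun hy => (hrefl hy.2).symm, fun hy => ?_⟩
    obtain rfl := hy
    exact ⟨hv, .refl⟩
  refine ⟨subset_rfl, empty_subset _, fun v hv => ?_,
    fun v hv => ⟨fun _ => hv, fun _ _ => notMem_empty _⟩, h, ?_⟩
  · obtain ⟨_, -, h⟩ := TransGen.tail'_iff.1 hv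
    exact notMem_empty _ h
  · ext ⟨x, y⟩
    simp only [mem_coe, Set.mem_iUnion, Set.mem_prod, exists_prop]
    refine ⟨fun hxy => ⟨(x, y), hxy, ?_⟩, fun ⟨e, he, hx, hy⟩ => ?_⟩
    · have hxy := mem_product.1 (h hxy)
      rw [hcl hxy.1, hcl hxy.2]
      exact ⟨rfl, rfl⟩
    · rwa [← hrefl hx.2, ← hrefl hy.2]

theorem exists_isDagCompression_card_eq_minCompSize (h : Eb ⊆ Vb ×ˢ Vb) :
    ∃ (V : Finset β) (A E : Finset (β × β)),
      IsDagCompression Vb Eb V A E ∧ A.card + E.card = minCompSize Vb Eb := by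
  unfold minCompSize
  exact Nat.sInf_mem (s := {n | ∃ (V : Finset β) (A E : Finset (β × β)),
    IsDagCompression Vb Eb V A E ∧ A.card + E.card = n})
    ⟨_, Vb, ∅, Eb, isDagCompression_self h, rfl⟩

end Compression

section Restrict

variable {β : Type*} [DecidableEq β]

open Classical in
noncomputable def restrictEdges (Vb : Finset β) (A E : Finset (β × β)) (Z : Finset β) :
    Finset (β × β) :=
  E.filter fun e => ¬ Cluster Vb A e.1 ⊆ Z ∧ ¬ Cluster Vb A e.2 ⊆ Z

def IsLive (Vb : Finset β) (A E : Finset (β × β)) (Z : Finset β) (v : β) : Prop :=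
  ∃ e ∈ restrictEdges Vb A E Z, ReflTransGen (ArcRel A) e.1 v ∨ ReflTransGen (ArcRel A) e.2 v

open Classical in
noncomputable def restrictArcs (Vb : Finset β) (A E : Finset (β × β)) (Z : Finset β) :
    Finset (β × β) :=
  A.filter fun a => IsLive Vb A E Z a.1 ∧ ¬ Cluster Vb A a.2 ⊆ Z

open Classical in
noncomputable def restrictVerts (Vb V : Finset β) (A E : Finset (β × β)) (Z : Finset β) :
    Finset β :=
  V.filter fun v => (IsLive Vb A E Z v ∧ ¬ Cluster Vb A v ⊆ Z) ∨ v ∈ Vb \ Z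

noncomputable def deletedItems (Vb : Finset β) (A E : Finset (β × β)) (Z : Finset β) :
    Finset ((β × β) ⊕ (β × β)) :=
  (A \ restrictArcs Vb A E Z).disjSum (E \ restrictEdges Vb A E Z)

variable {Vb V : Finset β} {Eb A E : Finset (β × β)} {Z : Finset β}

local infix:50 " ⇝ " => ReflTransGen (ArcRel A)

theorem mem_restrictEdges {e : β × β} :
    e ∈ restrictEdges Vb A E Z ↔ e ∈ E ∧ ¬ Cluster Vb A e.1 ⊆ Z ∧ ¬ Cluster Vb A e.2 ⊆ Z := by
  simp only [restrictEdges, mem_filter]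

theorem mem_restrictArcs {a : β × β} :
    a ∈ restrictArcs Vb A E Z ↔ a ∈ A ∧ IsLive Vb A E Z a.1 ∧ ¬ Cluster Vb A a.2 ⊆ Z := by
  simp only [restrictArcs, mem_filter]

theorem restrictArcs_subset : restrictArcs Vb A E Z ⊆ A :=
  fun _ ha => (mem_restrictArcs.1 ha).1

theorem restrictEdges_subset : restrictEdges Vb A E Z ⊆ E :=
  fun _ he => (mem_restrictEdges.1 he).1

theorem arcRel_restrictArcs_le : ArcRel (restrictArcs Vb A E Z) ≤ ArcRel A :=
  fun _ _ h => restrictArcs_subset h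

theorem reflTransGen_of_restrictArcs {x y : β}
    (h : ReflTransGen (ArcRel (restrictArcs Vb A E Z)) x y) : x ⇝ y :=
  ReflTransGen.mono arcRel_restrictArcs_le _ _ h

theorem inl_mem_deletedItems {a : β × β} :
    Sum.inl a ∈ deletedItems Vb A E Z ↔
      a ∈ A ∧ ¬ (IsLive Vb A E Z a.1 ∧ ¬ Cluster Vb A a.2 ⊆ Z) := by
  simp only [deletedItems, inl_mem_disjSum, mem_sdiff, mem_restrictArcs]
  tauto

theorem inr_mem_deletedItems {e : β × β} :
    Sum.inr e ∈ deletedItems Vb A E Z ↔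
      e ∈ E ∧ (Cluster Vb A e.1 ⊆ Z ∨ Cluster Vb A e.2 ⊆ Z) := by
  simp only [deletedItems, inr_mem_disjSum, mem_sdiff, mem_restrictEdges]
  tauto

theorem card_restrict_add_card_deletedItems :
    (restrictArcs Vb A E Z).card + (restrictEdges Vb A E Z).card +
      (deletedItems Vb A E Z).card = A.card + E.card := by
  have hA := card_sdiff_add_card_eq_card (restrictArcs_subset (Vb := Vb) (A := A) (E := E) (Z := Z))
  have hE :=
    card_sdiff_add_card_eq_card (restrictEdges_subset (Vb := Vb) (A := A) (E := E) (Z := Z))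
  rw [deletedItems, card_disjSum]
  omega

theorem IsLive.trans {u v : β} (hu : IsLive Vb A E Z u) (huv : u ⇝ v) : IsLive Vb A E Z v :=
  let ⟨e, he, h⟩ := hu
  ⟨e, he, h.imp (·.trans huv) (·.trans huv)⟩

theorem IsLive.reflTransGen_restrictArcs {u y : β} (hu : IsLive Vb A E Z u) (huy : u ⇝ y)
    (hy : y ∈ Vb \ Z) : ReflTransGen (ArcRel (restrictArcs Vb A E Z)) u y := by
  obtain ⟨hyV, hyZ⟩ := mem_sdiff.1 hy
  induction huy using ReflTransGen.head_induction_on with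
  | refl => exact .refl
  | @head a c hac hcy ih =>
    have hc : ¬ Cluster Vb A c ⊆ Z := fun h => hyZ (h ⟨hyV, hcy⟩)
    exact .head (mem_restrictArcs.2 ⟨hac, hu, hc⟩) (ih (hu.trans (.single hac)))

theorem IsLive.cluster_restrictArcs {v : β} (hv : IsLive Vb A E Z v) :
    Cluster (Vb \ Z) (restrictArcs Vb A E Z) v = Cluster Vb A v \ Z := by
  ext y
  refine ⟨fun ⟨hy, hvy⟩ => ?_, fun ⟨⟨hyV, hvy⟩, hyZ⟩ => ?_⟩
  · exact ⟨⟨(mem_sdiff.1 hy).1, reflTransGen_of_restrictArcs hvy⟩, (mem_sdiff.1 hy).2⟩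
  · have hy : y ∈ Vb \ Z := mem_sdiff.2 ⟨hyV, hyZ⟩
    exact ⟨hy, hv.reflTransGen_restrictArcs hvy hy⟩

theorem IsLive.mem_sdiff_of_forall_notMem_restrictArcs {v : β} (hv : IsLive Vb A E Z v)
    (hZ : ¬ Cluster Vb A v ⊆ Z) (hout : ∀ u, (v, u) ∉ restrictArcs Vb A E Z) : v ∈ Vb \ Z := by
  obtain ⟨w, ⟨hwV, hvw⟩, hwZ⟩ := Set.not_subset.1 hZ
  rcases hvw.cases_head with rfl | ⟨y, hvy, hyw⟩
  · exact mem_sdiff.2 ⟨hwV, hwZ⟩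
  · exact absurd (mem_restrictArcs.2 ⟨hvy, hv, fun h => hwZ (h ⟨hwV, hyw⟩)⟩) (hout y)

theorem IsDagCompression.represents_restrict (hc : IsDagCompression Vb Eb V A E) :
    (↑(Eb.filter fun e => e.1 ∉ Z ∧ e.2 ∉ Z) : Set (β × β)) =
      ⋃ e ∈ restrictEdges Vb A E Z, Cluster (Vb \ Z) (restrictArcs Vb A E Z) e.1 ×ˢ
        Cluster (Vb \ Z) (restrictArcs Vb A E Z) e.2 := by
  have hkept : ∀ {e}, e ∈ restrictEdges Vb A E Z →
      IsLive Vb A E Z e.1 ∧ IsLive Vb A E Z e.2 := fun he =>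
    ⟨⟨_, he, .inl .refl⟩, ⟨_, he, .inr .refl⟩⟩
  ext ⟨x, y⟩
  simp only [coe_filter, Set.mem_ofPred_eq, Set.mem_iUnion, Set.mem_prod, exists_prop]
  constructor
  · rintro ⟨hxy, hxZ, hyZ⟩
    obtain ⟨e, he, hx, hy⟩ := hc.exists_edge hxy
    have he' : e ∈ restrictEdges Vb A E Z :=
      mem_restrictEdges.2 ⟨he, fun h => hxZ (h hx), fun h => hyZ (h hy)⟩
    refine ⟨e, he', ?_, ?_⟩
    · rw [(hkept he').1.cluster_restrictArcs]
      exact ⟨hx, hxZ⟩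
    · rw [(hkept he').2.cluster_restrictArcs]
      exact ⟨hy, hyZ⟩
  · rintro ⟨e, he, hx, hy⟩
    rw [(hkept he).1.cluster_restrictArcs] at hx
    rw [(hkept he).2.cluster_restrictArcs] at hy
    exact ⟨hc.mem_of_mem_cluster (restrictEdges_subset he) hx.1 hy.1, hx.2, hy.2⟩

theorem IsDagCompression.restrict (hc : IsDagCompression Vb Eb V A E) (Z : Finset β) :
    IsDagCompression (Vb \ Z) (Eb.filter fun e => e.1 ∉ Z ∧ e.2 ∉ Z)
      (restrictVerts Vb V A E Z) (restrictArcs Vb A E Z) (restrictEdges Vb A E Z) := by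
  classical
  have hmem : ∀ {v}, v ∈ V → IsLive Vb A E Z v → ¬ Cluster Vb A v ⊆ Z →
      v ∈ restrictVerts Vb V A E Z := fun hv hlive hZ => mem_filter.2 ⟨hv, .inl ⟨hlive, hZ⟩⟩
  refine ⟨fun v hv => mem_filter.2 ⟨hc.vbar_subset (mem_sdiff.1 hv).1, .inr hv⟩, ?_,
    fun v hv => hc.acyclic v (TransGen.mono arcRel_restrictArcs_le _ _ hv), ?_, ?_,
    hc.represents_restrict⟩
  · intro a ha
    obtain ⟨hA, hlive, hZ⟩ := mem_restrictArcs.1 ha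
    have hV := mem_product.1 (hc.arcs_subset hA)
    have hZ₁ : ¬ Cluster Vb A a.1 ⊆ Z :=
      fun h => hZ ((cluster_subset_of_reflTransGen (.single hA)).trans h)
    exact mem_product.2 ⟨hmem hV.1 hlive hZ₁, hmem hV.2 (hlive.trans (.single hA)) hZ⟩
  · intro v hv
    obtain ⟨hvV, hv⟩ := mem_filter.1 hv
    refine ⟨fun hout => ?_, fun hvZ u hu => ?_⟩
    · exact hv.elim (fun ⟨hlive, hZ⟩ => hlive.mem_sdiff_of_forall_notMem_restrictArcs hZ hout) id
    · exact (hc.sinks v hvV).2 (mem_sdiff.1 hvZ).1 u (restrictArcs_subset hu)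
  · intro e he
    obtain ⟨hE, hZ₁, hZ₂⟩ := mem_restrictEdges.1 he
    have hV := mem_product.1 (hc.edges_subset hE)
    exact mem_product.2 ⟨hmem hV.1 ⟨e, he, .inl .refl⟩ hZ₁, hmem hV.2 ⟨e, he, .inr .refl⟩ hZ₂⟩

end Restrict

theorem aVert_ne_bVert {α : Type*} {S S' : Finset α} : aVert S ≠ bVert S' := by
  simp [aVert, bVert]

theorem aVert_notMem_image_inl {α : Type*} {S : Finset α} {s : Set α} :
    aVert S ∉ Sum.inl '' s := by
  simp [aVert]

section Tig

variable {α : Type*} [DecidableEq α]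

def twinPair (S : Finset α) : Finset (TigVertex α) := {aVert S, bVert S}

def InsideMember (T : Finset (Finset α)) (C : Set (TigVertex α)) : Prop :=
  ∃ S ∈ T, C ⊆ Sum.inl '' (S : Set α)

theorem inl_notMem_twinPair {S : Finset α} {s : α} : Sum.inl s ∉ twinPair S := by
  simp [twinPair, aVert, bVert]

theorem eq_of_mem_twinPair {S S' : Finset α} {x : TigVertex α} (h : x ∈ twinPair S)
    (h' : x ∈ twinPair S') : S = S' := by
  simp only [twinPair, aVert, bVert, mem_insert, mem_singleton] at h h'
  rcases h with rfl | rfl <;> rcases h' with h' | h' <;> simp_all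

theorem twinPair_mem_tigV {U : Finset α} {T : Finset (Finset α)} {S : Finset α} (hS : S ∈ T)
    {x : TigVertex α} (hx : x ∈ twinPair S) : x ∈ tigV U T := by
  simp only [twinPair, mem_insert, mem_singleton] at hx
  rcases hx with rfl | rfl
  · exact mem_union_left _ (mem_union_right _ (mem_image_of_mem _ hS))
  · exact mem_union_right _ (mem_image_of_mem _ hS)

theorem inl_mem_tigV {U : Finset α} {T : Finset (Finset α)} {u : α} (hu : u ∈ U) :
    Sum.inl u ∈ tigV U T := by
  simp [tigV, hu, aVert, bVert]

theorem mem_tigE_iff {T : Finset (Finset α)} {x y : TigVertex α} :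
    (x, y) ∈ tigE T ↔ ∃ S ∈ T, x ∈ twinPair S ∧ ∃ s ∈ S, y = Sum.inl s := by
  simp only [tigE, twinPair, mem_biUnion, mem_union, mem_image, Prod.mk.injEq, mem_insert,
    mem_singleton]
  grind

theorem tigE_subset {U : Finset α} {T : Finset (Finset α)} (hT : ∀ S ∈ T, S ⊆ U) :
    tigE T ⊆ tigV U T ×ˢ tigV U T := by
  rintro ⟨x, y⟩ hxy
  obtain ⟨S, hS, hx, s, hs, rfl⟩ := mem_tigE_iff.1 hxy
  exact mem_product.2 ⟨twinPair_mem_tigV hS hx, inl_mem_tigV (hT S hS hs)⟩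

theorem tigV_insert_sdiff_twinPair {U : Finset α} {T : Finset (Finset α)} {R : Finset α}
    (hR : R ∉ T) : tigV U (insert R T) \ twinPair R = tigV U T := by
  ext x
  simp only [tigV, twinPair, aVert, bVert, mem_sdiff, mem_union, mem_image, mem_insert,
    mem_singleton]
  grind

theorem tigE_insert_filter_twinPair {T : Finset (Finset α)} {R : Finset α} (hR : R ∉ T) :
    (tigE (insert R T)).filter (fun e => e.1 ∉ twinPair R ∧ e.2 ∉ twinPair R) = tigE T := by
  ext ⟨x, y⟩
  simp only [mem_filter, mem_tigE_iff, mem_insert]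
  constructor
  · rintro ⟨⟨S, rfl | hS, hx, hy⟩, hxR, -⟩
    · exact absurd hx hxR
    · exact ⟨S, hS, hx, hy⟩
  · rintro ⟨S, hS, hx, s, hs, rfl⟩
    refine ⟨⟨S, .inr hS, hx, s, hs, rfl⟩, fun hxR => ?_, inl_notMem_twinPair⟩
    exact hR (eq_of_mem_twinPair hx hxR ▸ hS)

variable {U : Finset α} {T : Finset (Finset α)} {V : Finset (TigVertex α)}
  {A E : Finset (TigVertex α × TigVertex α)} {e : TigVertex α × TigVertex α}

namespace IsDagCompression

theorem exists_twinPair_of_mem_cluster_fst (hc : IsDagCompression (tigV U T) (tigE T) V A E)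
    (he : e ∈ E) {x : TigVertex α} (hx : x ∈ Cluster (tigV U T) A e.1) :
    ∃ S ∈ T, x ∈ twinPair S := by
  obtain ⟨y, hy⟩ := hc.cluster_nonempty (mem_product.1 (hc.edges_subset he)).2
  obtain ⟨S, hS, hxS, -⟩ := mem_tigE_iff.1 (hc.mem_of_mem_cluster he hx hy)
  exact ⟨S, hS, hxS⟩

theorem cluster_snd_subset (hc : IsDagCompression (tigV U T) (tigE T) V A E) (he : e ∈ E)
    {S : Finset α} {x : TigVertex α} (hxS : x ∈ twinPair S)
    (hx : x ∈ Cluster (tigV U T) A e.1) : Cluster (tigV U T) A e.2 ⊆ Sum.inl '' (S : Set α) := by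
  intro y hy
  obtain ⟨S', -, hxS', s, hs, rfl⟩ := mem_tigE_iff.1 (hc.mem_of_mem_cluster he hx hy)
  exact ⟨s, eq_of_mem_twinPair hxS' hxS ▸ hs, rfl⟩

theorem cluster_snd_subset_range (hc : IsDagCompression (tigV U T) (tigE T) V A E)
    (he : e ∈ E) : Cluster (tigV U T) A e.2 ⊆ Set.range Sum.inl := by
  obtain ⟨x, hx⟩ := hc.cluster_nonempty (mem_product.1 (hc.edges_subset he)).1
  obtain ⟨S, -, hxS⟩ := hc.exists_twinPair_of_mem_cluster_fst he hx
  exact (hc.cluster_snd_subset he hxS hx).trans (Set.image_subset_range _ _)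

end IsDagCompression

end Tig

section Twin

variable {α : Type*} [DecidableEq α]

/-- The part of `R` that a deleted arc (`inl`) or compression edge (`inr`) can pay for. -/
def shadow (Vb : Finset (TigVertex α)) (A E : Finset (TigVertex α × TigVertex α)) :
    (TigVertex α × TigVertex α) ⊕ (TigVertex α × TigVertex α) → Set α
  | .inl a => Sum.inl ⁻¹' Cluster Vb A a.2 ∪
      {r | ∃ e ∈ E, ReflTransGen (ArcRel A) e.1 a.1 ∧ Sum.inl r ∈ Cluster Vb A e.2}
  | .inr e => Sum.inl ⁻¹' Cluster Vb A e.2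

/-- Deleted items that never pay for an element of `R` reached from `aVert R`. -/
def IsSpare (Vb : Finset (TigVertex α)) (T : Finset (Finset α)) (R : Finset α)
    (A E : Finset (TigVertex α × TigVertex α))
    (σ : (TigVertex α × TigVertex α) ⊕ (TigVertex α × TigVertex α)) : Prop :=
  σ ∈ deletedItems Vb A E (twinPair R) ∧
    σ.elim (fun a => (Cluster Vb A a.1 ⊆ twinPair R ∨ aVert R ∉ Cluster Vb A a.2) ∧
        ¬ InsideMember T (Cluster Vb A a.2))
      fun e => aVert R ∉ Cluster Vb A e.1

variable {U : Finset α} {T : Finset (Finset α)} {R : Finset α} {V : Finset (TigVertex α)}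
  {A E : Finset (TigVertex α × TigVertex α)}

local notation "𝒞" => Cluster (tigV U (insert R T)) A
local notation "𝒟" => deletedItems (tigV U (insert R T)) A E (twinPair R)
local notation "𝒮" => shadow (tigV U (insert R T)) A E
local notation "Live" => IsLive (tigV U (insert R T)) A E (twinPair R)
local notation "Spare" => IsSpare (tigV U (insert R T)) T R A E
local infix:50 " ⇝ " => ReflTransGen (ArcRel A)

theorem aVert_mem_twinPair : aVert R ∈ twinPair R := mem_insert_self _ _

theorem bVert_mem_twinPair : bVert R ∈ twinPair R := mem_insert_of_mem (mem_singleton_self _)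

theorem cluster_aVert (hc : IsDagCompression (tigV U (insert R T)) (tigE (insert R T)) V A E) :
    𝒞 (aVert R) = {aVert R} :=
  hc.cluster_eq_singleton (twinPair_mem_tigV (mem_insert_self R T) aVert_mem_twinPair)

theorem cluster_bVert (hc : IsDagCompression (tigV U (insert R T)) (tigE (insert R T)) V A E) :
    𝒞 (bVert R) = {bVert R} :=
  hc.cluster_eq_singleton (twinPair_mem_tigV (mem_insert_self R T) bVert_mem_twinPair)

theorem cluster_aVert_subset
    (hc : IsDagCompression (tigV U (insert R T)) (tigE (insert R T)) V A E) :
    𝒞 (aVert R) ⊆ twinPair R := by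
  rw [cluster_aVert hc]
  exact Set.singleton_subset_iff.2 aVert_mem_twinPair

theorem cluster_bVert_subset
    (hc : IsDagCompression (tigV U (insert R T)) (tigE (insert R T)) V A E) :
    𝒞 (bVert R) ⊆ twinPair R := by
  rw [cluster_bVert hc]
  exact Set.singleton_subset_iff.2 bVert_mem_twinPair

theorem exists_edge_of_mem_twinPair
    (hc : IsDagCompression (tigV U (insert R T)) (tigE (insert R T)) V A E)
    {x : TigVertex α} (hx : x ∈ twinPair R) {r : α} (hr : r ∈ R) :
    ∃ e ∈ E, x ∈ 𝒞 e.1 ∧ Sum.inl r ∈ 𝒞 e.2 :=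
  hc.exists_edge (mem_tigE_iff.2 ⟨R, mem_insert_self R T, hx, r, hr, rfl⟩)

theorem not_insideMember_of_subset_twinPair
    (hc : IsDagCompression (tigV U (insert R T)) (tigE (insert R T)) V A E) {v : TigVertex α}
    (hv : v ∈ V) (hvR : 𝒞 v ⊆ twinPair R) : ¬ InsideMember T (𝒞 v) := by
  rintro ⟨S, -, hS⟩
  obtain ⟨y, hy⟩ := hc.cluster_nonempty hv
  obtain ⟨s, -, rfl⟩ := hS hy
  exact inl_notMem_twinPair (hvR hy)

theorem not_cluster_snd_subset_twinPair
    (hc : IsDagCompression (tigV U (insert R T)) (tigE (insert R T)) V A E)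
    {e : TigVertex α × TigVertex α} (he : e ∈ E) : ¬ 𝒞 e.2 ⊆ twinPair R := by
  intro h
  obtain ⟨y, hy⟩ := hc.cluster_nonempty (mem_product.1 (hc.edges_subset he)).2
  obtain ⟨s, rfl⟩ := hc.cluster_snd_subset_range he hy
  exact inl_notMem_twinPair (h hy)

theorem exists_twinPair_of_reflTransGen
    (hc : IsDagCompression (tigV U (insert R T)) (tigE (insert R T)) V A E)
    {e : TigVertex α × TigVertex α} (he : e ∈ E) {p : TigVertex α} (hep : e.1 ⇝ p)
    (hp : ¬ 𝒞 p ⊆ twinPair R) : ∃ S ∈ T, ∃ x ∈ twinPair S, x ∈ 𝒞 p := by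
  obtain ⟨x, hxp, hxR⟩ := Set.not_subset.1 hp
  obtain ⟨S, hS, hxS⟩ :=
    hc.exists_twinPair_of_mem_cluster_fst he (cluster_subset_of_reflTransGen hep hxp)
  rcases mem_insert.1 hS with rfl | hS
  · exact absurd hxS hxR
  · exact ⟨S, hS, x, hxS, hxp⟩

/-- A live vertex whose cluster lies in the second shore sits below the head of a kept edge,
whose tail carries some `aVert S` or `bVert S` with `S ∈ T`. -/
theorem insideMember_of_isLive
    (hc : IsDagCompression (tigV U (insert R T)) (tigE (insert R T)) V A E) {v : TigVertex α}
    (hv : Live v) (hinl : 𝒞 v ⊆ Set.range Sum.inl) : InsideMember T (𝒞 v) := by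
  obtain ⟨e, he, hev | hev⟩ := hv
  · obtain ⟨heE, -, -⟩ := mem_restrictEdges.1 he
    obtain ⟨y, hy⟩ :=
      hc.cluster_nonempty (hc.mem_of_reflTransGen (mem_product.1 (hc.edges_subset heE)).1 hev)
    obtain ⟨S, -, hyS⟩ :=
      hc.exists_twinPair_of_mem_cluster_fst heE (cluster_subset_of_reflTransGen hev hy)
    obtain ⟨s, rfl⟩ := hinl hy
    exact absurd hyS inl_notMem_twinPair
  · obtain ⟨heE, he₁, -⟩ := mem_restrictEdges.1 he
    obtain ⟨S, hS, x, hxS, hx⟩ := exists_twinPair_of_reflTransGen hc heE .refl he₁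
    exact ⟨S, hS, (cluster_subset_of_reflTransGen hev).trans (hc.cluster_snd_subset heE hxS hx)⟩

theorem exists_shadow_subset_of_insideMember
    (hc : IsDagCompression (tigV U (insert R T)) (tigE (insert R T)) V A E)
    {a : TigVertex α × TigVertex α} (ha : Sum.inl a ∈ 𝒟) (hg : InsideMember T (𝒞 a.2)) :
    ∃ S ∈ T, 𝒮 (.inl a) ⊆ S := by
  obtain ⟨haA, hdel⟩ := inl_mem_deletedItems.1 ha
  have hV := mem_product.1 (hc.arcs_subset haA)
  have h₂ : ¬ 𝒞 a.2 ⊆ twinPair R := fun h => not_insideMember_of_subset_twinPair hc hV.2 h hg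
  have h₁ : ¬ 𝒞 a.1 ⊆ twinPair R :=
    fun h => h₂ ((cluster_subset_of_reflTransGen (.single haA)).trans h)
  obtain ⟨S, hS, hsub⟩ := hg
  refine ⟨S, hS, Set.union_subset ?_ ?_⟩
  · exact (Set.preimage_mono hsub).trans (Set.preimage_image_eq _ Sum.inl_injective).subset
  · rintro r ⟨e, he, hea, -⟩
    have he₁ : ¬ 𝒞 e.1 ⊆ twinPair R :=
      fun h => h₁ ((cluster_subset_of_reflTransGen hea).trans h)
    have hkept := mem_restrictEdges.2 ⟨he, he₁, not_cluster_snd_subset_twinPair hc he⟩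
    exact absurd ⟨⟨e, hkept, .inl hea⟩, h₂⟩ hdel

theorem exists_shadow_subset_of_reflTransGen
    (hc : IsDagCompression (tigV U (insert R T)) (tigE (insert R T)) V A E)
    {e a : TigVertex α × TigVertex α} (he : e ∈ E) (hea : e.1 ⇝ a.1)
    (h₁ : ¬ 𝒞 a.1 ⊆ twinPair R) (h₂ : 𝒞 a.2 ⊆ twinPair R) : ∃ S ∈ T, 𝒮 (.inl a) ⊆ S := by
  obtain ⟨S, hS, x, hxS, hx⟩ := exists_twinPair_of_reflTransGen hc he hea h₁
  refine ⟨S, hS, Set.union_subset (fun r hr => absurd (h₂ hr) inl_notMem_twinPair) ?_⟩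
  rintro r ⟨e', he', hea', hr⟩
  obtain ⟨s, hs, hsr⟩ :=
    hc.cluster_snd_subset he' hxS (cluster_subset_of_reflTransGen hea' hx) hr
  exact Sum.inl_injective hsr ▸ hs

theorem exists_nonspare_mem_shadow
    (hc : IsDagCompression (tigV U (insert R T)) (tigE (insert R T)) V A E)
    (hRcov : ∀ r ∈ R, ∃ S ∈ T, r ∈ S) {r : α} (hr : r ∈ R) :
    ∃ t ∈ 𝒟, ¬ Spare t ∧ r ∈ 𝒮 t ∧ ∃ S ∈ T, 𝒮 t ⊆ S := by
  obtain ⟨e, he, hx, hy⟩ := exists_edge_of_mem_twinPair hc aVert_mem_twinPair hr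
  by_cases hD : 𝒞 e.1 ⊆ twinPair R
  · by_cases hg : InsideMember T (𝒞 e.2)
    · obtain ⟨S, hS, hsub⟩ := hg
      refine ⟨.inr e, inr_mem_deletedItems.2 ⟨he, .inl hD⟩, fun h => h.2 hx, hy, S, hS, ?_⟩
      exact (Set.preimage_mono hsub).trans (Set.preimage_image_eq _ Sum.inl_injective).subset
    · -- walk down from the head of `e` to the first vertex inside a member of `T`
      have hgr : InsideMember T (𝒞 (Sum.inl r)) := by
        obtain ⟨S, hS, hrS⟩ := hRcov r hr
        refine ⟨S, hS, ?_⟩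
        rw [hc.cluster_eq_singleton hy.1]
        exact Set.singleton_subset_iff.2 ⟨r, hrS, rfl⟩
      obtain ⟨w, g, hwg, hw, hg', hew, hgr⟩ :=
        hy.2.exists_crossing (P := fun v => InsideMember T (𝒞 v)) hg hgr
      have hlive : ¬ Live w := fun h => hw (insideMember_of_isLive hc h
        ((cluster_subset_of_reflTransGen hew).trans (hc.cluster_snd_subset_range he)))
      have hdel : Sum.inl (w, g) ∈ 𝒟 := inl_mem_deletedItems.2 ⟨hwg, fun h => hlive h.1⟩
      exact ⟨.inl (w, g), hdel, fun h => h.2.2 hg', .inl ⟨hy.1, hgr⟩,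
        exists_shadow_subset_of_insideMember hc hdel hg'⟩
  · obtain ⟨p, q, hpq, hp, hq, hep, hqa⟩ :=
      hx.2.exists_crossing (P := fun v => 𝒞 v ⊆ twinPair R) hD (cluster_aVert_subset hc)
    refine ⟨.inl (p, q), inl_mem_deletedItems.2 ⟨hpq, fun h => h.2 hq⟩, fun h => ?_,
      .inr ⟨e, he, hep, hy⟩, exists_shadow_subset_of_reflTransGen hc he hep hp hq⟩
    exact h.2.1.elim hp fun h => h ⟨hx.1, hqa⟩

theorem isSpare_inl_of_subset_fst
    (hc : IsDagCompression (tigV U (insert R T)) (tigE (insert R T)) V A E)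
    {a : TigVertex α × TigVertex α} (ha : a ∈ A) (h₁ : 𝒞 a.1 ⊆ twinPair R) : Spare (.inl a) := by
  have h₂ : 𝒞 a.2 ⊆ twinPair R := (cluster_subset_of_reflTransGen (.single ha)).trans h₁
  exact ⟨inl_mem_deletedItems.2 ⟨ha, fun h => h.2 h₂⟩, .inl h₁,
    not_insideMember_of_subset_twinPair hc (mem_product.1 (hc.arcs_subset ha)).2 h₂⟩

theorem isSpare_inl_of_subset_snd
    (hc : IsDagCompression (tigV U (insert R T)) (tigE (insert R T)) V A E)
    {a : TigVertex α × TigVertex α} (ha : a ∈ A) (h₂ : 𝒞 a.2 ⊆ twinPair R)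
    (haR : aVert R ∉ 𝒞 a.2) : Spare (.inl a) :=
  ⟨inl_mem_deletedItems.2 ⟨ha, fun h => h.2 h₂⟩, .inr haR,
    not_insideMember_of_subset_twinPair hc (mem_product.1 (hc.arcs_subset ha)).2 h₂⟩

theorem isSpare_inr {e : TigVertex α × TigVertex α} (he : e ∈ E) (h₁ : 𝒞 e.1 ⊆ twinPair R)
    (haR : aVert R ∉ 𝒞 e.1) : Spare (.inr e) :=
  ⟨inr_mem_deletedItems.2 ⟨he, .inl h₁⟩, haR⟩

theorem coverNumber_add_two_le_of_isSpare
    (hc : IsDagCompression (tigV U (insert R T)) (tigE (insert R T)) V A E)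
    (hRcov : ∀ r ∈ R, ∃ S ∈ T, r ∈ S)
    {σ₁ σ₂ : (TigVertex α × TigVertex α) ⊕ (TigVertex α × TigVertex α)}
    (hne : σ₁ ≠ σ₂) (h₁ : Spare σ₁) (h₂ : Spare σ₂) : coverNumber T R + 2 ≤ (𝒟).card :=
  coverNumber_add_two_le 𝒮 hne h₁.1 h₂.1 fun _ hr => by
    obtain ⟨t, ht, hns, hrt, hS⟩ := exists_nonspare_mem_shadow hc hRcov hr
    exact ⟨t, ht, fun h => hns (h ▸ h₁), fun h => hns (h ▸ h₂), hrt, hS⟩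

theorem coverNumber_add_two_le_of_twins_mem
    (hc : IsDagCompression (tigV U (insert R T)) (tigE (insert R T)) V A E)
    (hRcov : ∀ r ∈ R, ∃ S ∈ T, r ∈ S) {v : TigVertex α} (hv : 𝒞 v ⊆ twinPair R)
    (ha : aVert R ∈ 𝒞 v) (hb : bVert R ∈ 𝒞 v) : coverNumber T R + 2 ≤ (𝒟).card := by
  obtain ⟨z, hvz, hza⟩ := ha.2.cases_tail.resolve_left fun h => by
    rw [← h, cluster_aVert hc] at hb
    exact aVert_ne_bVert hb.symm
  obtain ⟨z', hvz', hzb⟩ := hb.2.cases_tail.resolve_left fun h => by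
    rw [← h, cluster_bVert hc] at ha
    exact aVert_ne_bVert ha
  exact coverNumber_add_two_le_of_isSpare hc hRcov
    (fun h => aVert_ne_bVert (congrArg Prod.snd (Sum.inl_injective h)))
    (isSpare_inl_of_subset_fst hc hza ((cluster_subset_of_reflTransGen hvz).trans hv))
    (isSpare_inl_of_subset_fst hc hzb ((cluster_subset_of_reflTransGen hvz').trans hv))

theorem coverNumber_add_two_le_or_isSpare_of_bVert_mem
    (hc : IsDagCompression (tigV U (insert R T)) (tigE (insert R T)) V A E)
    (hRcov : ∀ r ∈ R, ∃ S ∈ T, r ∈ S) {e : TigVertex α × TigVertex α} (he : e ∈ E)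
    (hb : bVert R ∈ 𝒞 e.1) :
    coverNumber T R + 2 ≤ (𝒟).card ∨ Spare (.inr e) ∨
      ∃ a, e.1 ⇝ a.1 ∧ ¬ 𝒞 a.1 ⊆ twinPair R ∧ Spare (.inl a) := by
  by_cases hD : 𝒞 e.1 ⊆ twinPair R
  · by_cases ha : aVert R ∈ 𝒞 e.1
    · exact .inl (coverNumber_add_two_le_of_twins_mem hc hRcov hD ha hb)
    · exact .inr (.inl (isSpare_inr he hD ha))
  · obtain ⟨p, q, hpq, hp, hq, hep, hqb⟩ :=
      hb.2.exists_crossing (P := fun v => 𝒞 v ⊆ twinPair R) hD (cluster_bVert_subset hc)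
    by_cases ha : aVert R ∈ 𝒞 q
    · exact .inl (coverNumber_add_two_le_of_twins_mem hc hRcov hq ha ⟨hb.1, hqb⟩)
    · exact .inr (.inr ⟨(p, q), hep, hp, isSpare_inl_of_subset_snd hc hpq hq ha⟩)

theorem exists_superset_of_reflTransGen_of_bVert_mem
    (hc : IsDagCompression (tigV U (insert R T)) (tigE (insert R T)) V A E)
    (hRne : R.Nonempty) {p : TigVertex α} (hp : ¬ 𝒞 p ⊆ twinPair R)
    (hfun : ∀ e ∈ E, bVert R ∈ 𝒞 e.1 → e.1 ⇝ p) : ∃ S ∈ T, R ⊆ S := by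
  obtain ⟨r₀, hr₀⟩ := hRne
  obtain ⟨e₀, he₀, hb₀, -⟩ := exists_edge_of_mem_twinPair hc bVert_mem_twinPair hr₀
  obtain ⟨S, hS, x, hxS, hx⟩ := exists_twinPair_of_reflTransGen hc he₀ (hfun e₀ he₀ hb₀) hp
  refine ⟨S, hS, fun r hr => ?_⟩
  obtain ⟨e, he, hb, hre⟩ := exists_edge_of_mem_twinPair hc bVert_mem_twinPair hr
  obtain ⟨s, hs, hsr⟩ :=
    hc.cluster_snd_subset he hxS (cluster_subset_of_reflTransGen (hfun e he hb) hx) hre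
  exact Sum.inl_injective hsr ▸ hs

theorem cluster_snd_eq_of_forall_bVert_mem
    (hc : IsDagCompression (tigV U (insert R T)) (tigE (insert R T)) V A E)
    {ε : TigVertex α × TigVertex α} (hε : Spare (.inr ε))
    (hfun : ∀ e ∈ E, bVert R ∈ 𝒞 e.1 → e = ε) : 𝒞 ε.2 = Sum.inl '' (R : Set α) := by
  obtain ⟨hdel, haR⟩ := hε
  obtain ⟨hεE, hD | hD⟩ := inr_mem_deletedItems.1 hdel
  · have hb : bVert R ∈ 𝒞 ε.1 := by
      obtain ⟨y, hy⟩ := hc.cluster_nonempty (mem_product.1 (hc.edges_subset hεE)).1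
      have hyR := hD hy
      simp only [twinPair, coe_insert, coe_singleton, Set.mem_insert_iff,
        Set.mem_singleton_iff] at hyR
      rcases hyR with rfl | rfl
      · exact absurd hy haR
      · exact hy
    refine (hc.cluster_snd_subset hεE bVert_mem_twinPair hb).antisymm ?_
    rintro _ ⟨r, hr, rfl⟩
    obtain ⟨e, he, hbe, hre⟩ := exists_edge_of_mem_twinPair hc bVert_mem_twinPair hr
    exact hfun e he hbe ▸ hre
  · exact absurd hD (not_cluster_snd_subset_twinPair hc hεE)

theorem exists_mem_deletedItems_aVert_mem
    (hc : IsDagCompression (tigV U (insert R T)) (tigE (insert R T)) V A E)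
    (hRne : R.Nonempty) : ∃ σ ∈ 𝒟, (∃ e, σ = .inr e ∧ aVert R ∈ 𝒞 e.1) ∨
      ∃ z, σ = .inl (z, aVert R) ∧ aVert R ∈ 𝒞 z := by
  obtain ⟨r₀, hr₀⟩ := hRne
  obtain ⟨e, he, ha, -⟩ := exists_edge_of_mem_twinPair hc aVert_mem_twinPair hr₀
  by_cases hD : 𝒞 e.1 ⊆ twinPair R
  · exact ⟨.inr e, inr_mem_deletedItems.2 ⟨he, .inl hD⟩, .inl ⟨e, rfl, ha⟩⟩
  · obtain ⟨z, -, hza⟩ := ha.2.cases_tail.resolve_left fun h => hD (h ▸ cluster_aVert_subset hc)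
    exact ⟨.inl (z, aVert R), inl_mem_deletedItems.2 ⟨hza, fun h => h.2 (cluster_aVert_subset hc)⟩,
      .inr ⟨z, rfl, ha.1, .single hza⟩⟩

theorem coverNumber_add_two_le_of_outArcs
    (hc : IsDagCompression (tigV U (insert R T)) (tigE (insert R T)) V A E)
    {v : TigVertex α} (hlive : ¬ Live v) (hvV : v ∉ tigV U (insert R T))
    (hvR : Sum.inl '' (R : Set α) ⊆ 𝒞 v) (hout : ∀ y, (v, y) ∈ A → InsideMember T (𝒞 y))
    {σ₁ σ₂ : (TigVertex α × TigVertex α) ⊕ (TigVertex α × TigVertex α)} (hne : σ₁ ≠ σ₂)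
    (h₁ : σ₁ ∈ 𝒟) (h₂ : σ₂ ∈ 𝒟) (hσ₁ : ∀ y, σ₁ ≠ .inl (v, y)) (hσ₂ : ∀ y, σ₂ ≠ .inl (v, y)) :
    coverNumber T R + 2 ≤ (𝒟).card := by
  refine coverNumber_add_two_le 𝒮 hne h₁ h₂ fun r hr => ?_
  have hrv : Sum.inl r ∈ 𝒞 v := hvR ⟨r, hr, rfl⟩
  obtain ⟨y, hvy, hyr⟩ := hrv.2.cases_head.resolve_left fun h => hvV (h ▸ hrv.1)
  have hdel : Sum.inl (v, y) ∈ 𝒟 := inl_mem_deletedItems.2 ⟨hvy, fun h => hlive h.1⟩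
  exact ⟨.inl (v, y), hdel, (hσ₁ y).symm, (hσ₂ y).symm, .inl ⟨hrv.1, hyr⟩,
    exists_shadow_subset_of_insideMember hc hdel (hout y hvy)⟩

theorem coverNumber_add_two_le_of_forall_bVert_mem
    (hc : IsDagCompression (tigV U (insert R T)) (tigE (insert R T)) V A E)
    (hRcov : ∀ r ∈ R, ∃ S ∈ T, r ∈ S) (hRns : ∀ S ∈ T, ¬ R ⊆ S) (hRne : R.Nonempty)
    {ε : TigVertex α × TigVertex α} (hε : Spare (.inr ε))
    (hfun : ∀ e ∈ E, bVert R ∈ 𝒞 e.1 → e = ε) : coverNumber T R + 2 ≤ (𝒟).card := by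
  have hεR := cluster_snd_eq_of_forall_bVert_mem hc hε hfun
  have hvg : ¬ InsideMember T (𝒞 ε.2) := fun ⟨S, hS, h⟩ => hRns S hS <| by
    rw [hεR] at h
    exact_mod_cast (Set.image_subset_image_iff Sum.inl_injective).1 h
  have hlive : ¬ Live ε.2 :=
    fun h => hvg (insideMember_of_isLive hc h (hεR ▸ Set.image_subset_range _ _))
  have hvV : ε.2 ∉ tigV U (insert R T) := fun h => hvg <| by
    obtain ⟨r₀, hr₀⟩ := hRne
    obtain ⟨S, hS, hr₀S⟩ := hRcov r₀ hr₀
    have hr₀v : Sum.inl r₀ ∈ 𝒞 ε.2 := hεR ▸ ⟨r₀, hr₀, rfl⟩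
    rw [hc.cluster_eq_singleton h] at hr₀v ⊢
    exact ⟨S, hS, Set.singleton_subset_iff.2 ⟨r₀, hr₀S, hr₀v⟩⟩
  by_cases hout : ∀ y, (ε.2, y) ∈ A → InsideMember T (𝒞 y)
  · obtain ⟨σ, hσ, hσa⟩ := exists_mem_deletedItems_aVert_mem hc hRne
    refine coverNumber_add_two_le_of_outArcs hc hlive hvV hεR.ge hout ?_ hε.1 hσ
      (fun _ => Sum.inr_ne_inl) ?_
    · rintro rfl
      obtain ⟨e, he, ha⟩ | ⟨z, hz, -⟩ := hσa
      · exact hε.2 (Sum.inr_injective he ▸ ha)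
      · exact Sum.inr_ne_inl hz
    · rintro y rfl
      obtain ⟨e, he, -⟩ | ⟨z, hz, ha⟩ := hσa
      · exact Sum.inl_ne_inr he
      · obtain ⟨rfl, -⟩ := Prod.mk.inj (Sum.inl_injective hz)
        exact aVert_notMem_image_inl (hεR ▸ ha)
  · push Not at hout
    obtain ⟨y, hy, hyg⟩ := hout
    have hya : aVert R ∉ 𝒞 y := fun h =>
      aVert_notMem_image_inl (hεR ▸ cluster_subset_of_reflTransGen (.single hy) h)
    exact coverNumber_add_two_le_of_isSpare hc hRcov Sum.inl_ne_inr
      ⟨inl_mem_deletedItems.2 ⟨hy, fun h => hlive h.1⟩, .inr hya, hyg⟩ hε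

theorem coverNumber_add_two_le_card_deletedItems
    (hc : IsDagCompression (tigV U (insert R T)) (tigE (insert R T)) V A E)
    (hRcov : ∀ r ∈ R, ∃ S ∈ T, r ∈ S) (hRns : ∀ S ∈ T, ¬ R ⊆ S) (hRne : R.Nonempty) :
    coverNumber T R + 2 ≤ (𝒟).card := by
  by_contra hlt
  have hunique : ∀ {σ₁ σ₂}, Spare σ₁ → Spare σ₂ → σ₁ = σ₂ := fun h₁ h₂ =>
    by_contra fun hne => hlt (coverNumber_add_two_le_of_isSpare hc hRcov hne h₁ h₂)
  have hentry := fun {e} (he : e ∈ E) (hb : bVert R ∈ 𝒞 e.1) =>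
    (coverNumber_add_two_le_or_isSpare_of_bVert_mem hc hRcov he hb).resolve_left hlt
  obtain ⟨r₀, hr₀⟩ := hRne
  obtain ⟨e₀, he₀, hb₀, -⟩ := exists_edge_of_mem_twinPair hc bVert_mem_twinPair hr₀
  rcases hentry he₀ hb₀ with hε | ⟨a, -, ha, hspare⟩
  · refine hlt (coverNumber_add_two_le_of_forall_bVert_mem hc hRcov hRns ⟨r₀, hr₀⟩ hε
      fun e he hb => ?_)
    rcases hentry he hb with h | ⟨a', -, -, ha'⟩
    · exact Sum.inr_injective (hunique h hε)
    · exact absurd (hunique ha' hε) Sum.inl_ne_inr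
  · have hfun : ∀ e ∈ E, bVert R ∈ 𝒞 e.1 → e.1 ⇝ a.1 := fun e he hb => by
      rcases hentry he hb with h | ⟨a', hea', -, ha'⟩
      · exact absurd (hunique h hspare) Sum.inr_ne_inl
      · exact Sum.inl_injective (hunique ha' hspare) ▸ hea'
    obtain ⟨S, hS, hRS⟩ := exists_superset_of_reflTransGen_of_bVert_mem hc ⟨r₀, hr₀⟩ ha hfun
    exact hRns S hS hRS

end Twin

theorem twinned_size_lower_bound_general {α : Type*} [DecidableEq α]
    (U : Finset α) (T : Finset (Finset α)) (hT : ∀ S ∈ T, S ⊆ U)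
    (R : Finset α) (hRU : R ⊆ U) (hRne : R.Nonempty)
    (hRns : ∀ S ∈ T, ¬ R ⊆ S)
    (X₀ : Finset (Finset α)) (hX₀T : X₀ ⊆ T) (hX₀cov : R ⊆ X₀.sup id)
    (k : ℕ)
    (hk : k = sInf {m | ∃ X : Finset (Finset α), X ⊆ T ∧ R ⊆ X.sup id ∧ X.card = m}) :
    minCompSize (tigV U T) (tigE T) + k + 2 ≤
      minCompSize (tigV U (insert R T)) (tigE (insert R T)) := by
  have hRT : R ∉ T := fun h => hRns R h subset_rfl
  have hRcov : ∀ r ∈ R, ∃ S ∈ T, r ∈ S := fun r hr =>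
    let ⟨S, hS, hrS⟩ := mem_sup.1 (hX₀cov hr)
    ⟨S, hX₀T hS, hrS⟩
  have hT' : ∀ S ∈ insert R T, S ⊆ U := (forall_mem_insert _ _ _).2 ⟨hRU, hT⟩
  obtain ⟨V, A, E, hc, hcard⟩ := exists_isDagCompression_card_eq_minCompSize (tigE_subset hT')
  have hrestr := hc.restrict (twinPair R)
  rw [tigV_insert_sdiff_twinPair hRT, tigE_insert_filter_twinPair hRT] at hrestr
  have hk' : k = coverNumber T R := hk
  have hs := hrestr.minCompSize_le
  have hdel := coverNumber_add_two_le_card_deletedItems hc hRcov hRns hRne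
  have hsplit := card_restrict_add_card_deletedItems (Vb := tigV U (insert R T)) (A := A)
    (E := E) (Z := twinPair R)
  omega

/-- if `R ⊆ U` is nonempty, not a subset of any member of `T`, but covered
by some subcollection of `T`, and `k` is the minimum cardinality of a subcollection of
`T` covering `R`, then `s' ≥ s + k + 2` for the minimum compression sizes `s`, `s'` of
the twinned incidence graphs of `T` and `T ∪ {R}`. -/
theorem twinned_size_lower_bound {α : Type*} [DecidableEq α] [Infinite α]
    (U : Finset α) (T : Finset (Finset α)) (hT : ∀ S ∈ T, S ⊆ U)
    (R : Finset α) (hRU : R ⊆ U) (hRne : R.Nonempty)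
    (hRns : ∀ S ∈ T, ¬ R ⊆ S)
    (X₀ : Finset (Finset α)) (hX₀T : X₀ ⊆ T) (hX₀cov : R ⊆ X₀.sup id)
    (k : ℕ)
    (hk : k = sInf {m | ∃ X : Finset (Finset α), X ⊆ T ∧ R ⊆ X.sup id ∧ X.card = m}) :
    minCompSize (tigV U T) (tigE T) + k + 2 ≤
      minCompSize (tigV U (insert R T)) (tigE (insert R T)) :=
  twinned_size_lower_bound_general U T hT R hRU hRne hRns X₀ hX₀T hX₀cov k hk
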